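/- arXiv:2405.18494 — 4 statements merged into one kernel-verified Lean document; each statement's English description precedes it below -/
import Mathlib

section
/- Let r ≥ 0 be an integer and let G be a finite simple graph on n vertices having exactly one vertex x of degree r+1, with every other vertex of degree r. Then the complement of G contains a matching M such that x is not covered by M and M covers at least n − n/(n−r) − 3 vertices. -/
/-!
Let `k = n - r`. In `Gᶜ` every vertex other than `x` has degree `k - 1`, and `x` has degree
`k - 2`. By the Tutte–Berge bound, `Gᶜ` has a matching missing at most `o(Gᶜ - S) - |S|` vertices
for some `S`, where `o` counts odd components; the bound follows from Tutte's theorem applied to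
`Gᶜ` joined with `max_S (o(Gᶜ - S) - |S|)` universal vertices.

A component `C` of `Gᶜ - S` that avoids `x` and has fewer than `k` vertices receives at least
`|C| (k - |C|) ≥ k - 1` edges from `S`, while `S` sends out at most `|S| (k - 1)` edges, so there
are at most `|S|` such components. At most one component contains `x`, and at most `(n - |S|) / k`
components have `k` or more vertices. Hence the matching misses at most `1 + n / k` vertices, and
removing the edge that covers `x` uncovers at most two more.
-/

noncomputable def degr {V : Type*} (G : SimpleGraph V) (v : V) : ℕ :=
  (G.neighborSet v).ncard

open Finset

lemma Nat.sub_one_le_mul_sub {m k : ℕ} (h1 : 1 ≤ m) (h2 : m < k) : k - 1 ≤ m * (k - m) := by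
  obtain ⟨a, rfl⟩ := Nat.exists_eq_add_of_le h1
  obtain ⟨b, rfl⟩ := Nat.exists_eq_add_of_lt h2
  rw [show 1 + a + b + 1 - 1 = a + b + 1 by omega, show 1 + a + b + 1 - (1 + a) = b + 1 by omega]
  nlinarith

lemma Finset.card_mul_le_card_of_pairwiseDisjoint {α : Type*} [DecidableEq α] {T : Finset α}
    {𝒟 : Finset (Finset α)} {k : ℕ} (hdisj : (𝒟 : Set (Finset α)).PairwiseDisjoint id)
    (hsub : ∀ C ∈ 𝒟, C ⊆ T) (hbig : ∀ C ∈ 𝒟, k ≤ #C) : #𝒟 * k ≤ #T :=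
  calc #𝒟 * k ≤ ∑ C ∈ 𝒟, #C := by simpa using card_nsmul_le_sum 𝒟 card k hbig
    _ = #(𝒟.biUnion id) := (card_biUnion hdisj).symm
    _ ≤ #T := card_le_card (biUnion_subset.mpr hsub)

namespace SimpleGraph

section TutteBerge

variable {V W : Type*} {G : SimpleGraph V}

lemma Iso.ncard_oddComponents_eq {G' : SimpleGraph W} (φ : G ≃g G') :
    G.oddComponents.ncard = G'.oddComponents.ncard := by
  rw [← Nat.card_coe_set_eq, ← Nat.card_coe_set_eq]
  refine Nat.card_congr (φ.connectedComponentEquiv.subtypeEquiv fun c => ?_)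
  simp only [Set.mem_ofPred_eq, ← Nat.card_coe_set_eq,
    Nat.card_congr (ConnectedComponent.isoEquivSupp φ c)]

noncomputable abbrev numOddComponentsDeleteVerts (G : SimpleGraph V) (S : Set V) : ℕ :=
  ((⊤ : G.Subgraph).deleteVerts S).coe.oddComponents.ncard

lemma even_numOddComponentsDeleteVerts_add [Finite V] (S : Set V) :
    Even (G.numOddComponentsDeleteVerts S + S.ncard + Nat.card V) := by
  have hodd := odd_ncard_oddComponents ((⊤ : G.Subgraph).deleteVerts S).coe
  have hcard : Nat.card ((⊤ : G.Subgraph).deleteVerts S).verts + S.ncard = Nat.card V := by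
    rw [Nat.card_coe_set_eq, Subgraph.deleteVerts_verts, Subgraph.verts_top,
      ← Set.compl_eq_univ_sdiff, add_comm, Set.ncard_add_ncard_compl]
  rw [← hcard]
  rw [← Nat.not_even_iff_odd, ← Nat.not_even_iff_odd, not_iff_not] at hodd
  grind

def addUniversalVerts (G : SimpleGraph V) (W : Type*) : SimpleGraph (V ⊕ W) where
  Adj a b := match a, b with
    | .inl v, .inl w => G.Adj v w
    | a, b => a ≠ b
  symm := ⟨by
    rintro (v | i) (w | j) h
    exacts [h.symm, Sum.inr_ne_inl, Sum.inl_ne_inr, fun e => h e.symm]⟩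
  loopless := ⟨by rintro (v | i) h; exacts [G.loopless.irrefl v h, h rfl]⟩

@[simp]
lemma addUniversalVerts_inr_adj {i : W} {a : V ⊕ W} :
    (G.addUniversalVerts W).Adj (.inr i) a ↔ .inr i ≠ a := by
  cases a <;> rfl

noncomputable def deleteVertsAddUniversalVertsIso {u : Set (V ⊕ W)} (hu : ∀ i, .inr i ∈ u) :
    ((⊤ : G.Subgraph).deleteVerts (Sum.inl ⁻¹' u)).coe ≃g
      ((⊤ : (G.addUniversalVerts W).Subgraph).deleteVerts u).coe where
  toEquiv := Equiv.ofBijective (fun v => ⟨.inl v.1, by simpa using v.2⟩) <| by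
    refine ⟨fun v w h => Subtype.ext (Sum.inl_injective (congrArg Subtype.val h)), ?_⟩
    rintro ⟨v | i, hv⟩
    · exact ⟨⟨v, by simpa using hv⟩, rfl⟩
    · exact absurd (hu i) (by simpa using hv)
  map_rel_iff' := Iff.rfl

lemma preconnected_deleteVerts_addUniversalVerts {u : Set (V ⊕ W)} {i : W} (hi : .inr i ∉ u) :
    ((⊤ : (G.addUniversalVerts W).Subgraph).deleteVerts u).coe.Preconnected := by
  have hreach : ∀ a, ((⊤ : (G.addUniversalVerts W).Subgraph).deleteVerts u).coe.Reachable
      ⟨.inr i, by simpa using hi⟩ a := by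
    rintro ⟨a, ha⟩
    by_cases hai : Sum.inr i = a
    · subst hai; rfl
    · exact Adj.reachable
        (Subgraph.deleteVerts_adj.mpr ⟨trivial, hi, trivial, ha.2, by simpa using hai⟩)
  exact fun a b => (hreach a).symm.trans (hreach b)

lemma addUniversalVerts_not_isTutteViolator [Finite V] [Finite W]
    (hmax : ∀ S, G.numOddComponentsDeleteVerts S ≤ S.ncard + Nat.card W)
    (heven : Even (Nat.card V + Nat.card W)) (u : Set (V ⊕ W)) :
    ¬ (G.addUniversalVerts W).IsTutteViolator u := by
  rw [IsTutteViolator, not_lt]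
  by_cases hu : ∀ i, .inr i ∈ u
  · have hcard : u.ncard = (Sum.inl ⁻¹' u).ncard + Nat.card W := by
      rw [← Nat.card_coe_set_eq, Nat.card_congr Equiv.subtypeSum, Nat.card_sum,
        Nat.card_congr (Equiv.subtypeUnivEquiv hu)]
      rfl
    rw [← (deleteVertsAddUniversalVertsIso hu).ncard_oddComponents_eq, hcard]
    exact hmax _
  push Not at hu
  obtain ⟨i, hi⟩ := hu
  have := (preconnected_deleteVerts_addUniversalVerts (G := G) hi)
    |>.subsingleton_connectedComponent
  have hle := Set.ncard_le_one_of_subsingleton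
    ((⊤ : (G.addUniversalVerts W).Subgraph).deleteVerts u).coe.oddComponents
  rcases u.eq_empty_or_nonempty with rfl | hne
  · have hodd := odd_ncard_oddComponents
      ((⊤ : (G.addUniversalVerts W).Subgraph).deleteVerts ∅).coe
    have hcard : Nat.card ((⊤ : (G.addUniversalVerts W).Subgraph).deleteVerts ∅).verts =
        Nat.card V + Nat.card W := by
      simp only [Subgraph.deleteVerts_verts, Subgraph.verts_top, Set.sdiff_empty,
        Nat.card_coe_set_eq, Set.ncard_univ, Nat.card_sum]
    rw [hcard] at hodd
    rw [Set.ncard_empty, Nat.le_zero]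
    by_contra hpos
    have hone :
        ((⊤ : (G.addUniversalVerts W).Subgraph).deleteVerts ∅).coe.oddComponents.ncard = 1 := by
      omega
    exact Nat.not_odd_iff_even.mpr heven (hodd.mp (hone ▸ odd_one))
  · exact hle.trans hne.ncard_pos

lemma exists_isMatching_of_isPerfectMatching_addUniversalVerts [Finite V] [Finite W]
    {M' : (G.addUniversalVerts W).Subgraph} (hM' : M'.IsPerfectMatching) :
    ∃ M : G.Subgraph, M.IsMatching ∧ Nat.card V ≤ M.verts.ncard + Nat.card W := by
  let M : G.Subgraph :=
    { verts := {v | ∃ w, M'.Adj (.inl v) (.inl w)}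
      Adj v w := M'.Adj (.inl v) (.inl w)
      adj_sub h := M'.adj_sub h
      edge_vert h := ⟨_, h⟩
      symm := ⟨fun _ _ h => h.symm⟩ }
  have hM : M.IsMatching := by
    rintro v ⟨w, hvw⟩
    exact ⟨w, hvw, fun w' hvw' => Sum.inl_injective (hM'.1.eq_of_adj_left hvw' hvw)⟩
  let R : Set V := {v | ∃ i, M'.Adj (.inl v) (.inr i)}
  have hcover : Set.univ ⊆ M.verts ∪ R := by
    intro v _
    obtain ⟨a, ha, -⟩ := Subgraph.isPerfectMatching_iff.mp hM' (.inl v)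
    rcases a with w | i
    exacts [.inl ⟨w, ha⟩, .inr ⟨i, ha⟩]
  have hR : R.ncard ≤ Nat.card W := by
    rw [← Nat.card_coe_set_eq]
    refine Nat.card_le_card_of_injective (fun v => v.2.choose) fun v w hvw => ?_
    have hw := w.2.choose_spec
    rw [← show v.2.choose = w.2.choose from hvw] at hw
    exact Subtype.ext (Sum.inl_injective (hM'.1.eq_of_adj_right v.2.choose_spec hw))
  refine ⟨M, hM, ?_⟩
  calc Nat.card V = (Set.univ : Set V).ncard := (Set.ncard_univ V).symm
    _ ≤ (M.verts ∪ R).ncard := Set.ncard_le_ncard hcover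
    _ ≤ M.verts.ncard + R.ncard := Set.ncard_union_le _ _
    _ ≤ M.verts.ncard + Nat.card W := by gcongr

theorem exists_isMatching_card_add_le [Finite V] (G : SimpleGraph V) :
    ∃ M : G.Subgraph, M.IsMatching ∧
      ∃ S : Set V, Nat.card V + S.ncard ≤ M.verts.ncard + G.numOddComponentsDeleteVerts S := by
  obtain ⟨S, -, hS⟩ := Set.exists_max_image Set.univ
    (fun S : Set V => (G.numOddComponentsDeleteVerts S : ℤ) - S.ncard) Set.finite_univ
    ⟨∅, trivial⟩
  obtain ⟨d, hd⟩ : ∃ d : ℕ, (d : ℤ) = G.numOddComponentsDeleteVerts S - S.ncard :=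
    ⟨_, Int.toNat_of_nonneg (by have := hS ∅ trivial; simp only [Set.ncard_empty] at this; omega)⟩
  have hmax : ∀ T, G.numOddComponentsDeleteVerts T ≤ T.ncard + Nat.card (Fin d) := by
    intro T
    have := hS T trivial
    rw [Nat.card_fin]
    omega
  have heven : Even (Nat.card V + Nat.card (Fin d)) := by
    obtain ⟨m, hm⟩ := G.even_numOddComponentsDeleteVerts_add S
    exact ⟨m - S.ncard, by rw [Nat.card_fin]; omega⟩
  obtain ⟨M', hM'⟩ := tutte.mpr (addUniversalVerts_not_isTutteViolator hmax heven)
  obtain ⟨M, hM, hcard⟩ := exists_isMatching_of_isPerfectMatching_addUniversalVerts hM'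
  rw [Nat.card_fin] at hcard
  exact ⟨M, hM, S, by omega⟩

lemma Subgraph.IsMatching.exists_notMem_verts [Finite V] {M : G.Subgraph} (hM : M.IsMatching)
    (x : V) :
    ∃ M' : G.Subgraph, M'.IsMatching ∧ x ∉ M'.verts ∧ M.verts.ncard ≤ M'.verts.ncard + 2 := by
  by_cases hx : x ∈ M.verts
  swap
  · exact ⟨M, hM, hx, by omega⟩
  obtain ⟨y, hxy, -⟩ := hM hx
  refine ⟨M.deleteVerts {x, y}, fun v hv => ?_, fun h => h.2 (.inl rfl), ?_⟩
  · obtain ⟨w, hvw, huniq⟩ := hM hv.1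
    have hw : w ∉ ({x, y} : Set V) := by
      rintro (rfl | rfl)
      · exact hv.2 (.inr (hM.eq_of_adj_right hvw hxy.symm))
      · exact hv.2 (.inl (hM.eq_of_adj_right hvw hxy))
    exact ⟨w, Subgraph.deleteVerts_adj.mpr ⟨hv.1, hv.2, hvw.snd_mem, hw, hvw⟩,
      fun w' hvw' => huniq w' (Subgraph.deleteVerts_adj.mp hvw').2.2.2.2⟩
  · calc M.verts.ncard ≤ (M.verts \ {x, y}).ncard + ({x, y} : Set V).ncard :=
          Set.ncard_le_ncard_sdiff_add_ncard _ _
      _ ≤ (M.verts \ {x, y}).ncard + 2 := by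
          gcongr
          exact (Set.ncard_insert_le _ _).trans (by rw [Set.ncard_singleton])

end TutteBerge

section ComponentCount

variable {V : Type*} [Fintype V] [DecidableEq V] {H : SimpleGraph V} [DecidableRel H.Adj]
  {S : Finset V} {k : ℕ}

lemma sub_card_le_card_filter_adj {C : Finset V} {v : V} (hv : v ∈ C)
    (hclosed : H.neighborFinset v ⊆ C ∪ S) (hdeg : k - 1 ≤ H.degree v) :
    k - #C ≤ #(S.filter (H.Adj v)) := by
  have hsub : H.neighborFinset v ⊆ C.erase v ∪ S.filter (H.Adj v) := by
    intro w hw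
    have hvw := (mem_neighborFinset H v w).mp hw
    rcases mem_union.mp (hclosed hw) with hwC | hwS
    · exact mem_union_left _ (mem_erase.mpr ⟨hvw.ne.symm, hwC⟩)
    · exact mem_union_right _ (mem_filter.mpr ⟨hwS, hvw⟩)
  have := (card_le_card hsub).trans (card_union_le _ _)
  rw [card_neighborFinset_eq_degree, card_erase_of_mem hv] at this
  have := card_pos.mpr ⟨v, hv⟩
  omega

lemma sub_one_le_card_filter_adj_product {C : Finset V} (hne : C.Nonempty) (hsmall : #C < k)
    (hclosed : ∀ v ∈ C, H.neighborFinset v ⊆ C ∪ S) (hdeg : ∀ v ∈ C, k - 1 ≤ H.degree v) :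
    k - 1 ≤ #((C ×ˢ S).filter fun p => H.Adj p.1 p.2) := by
  rw [card_filter, sum_product]
  simp only [← card_filter]
  calc k - 1 ≤ #C * (k - #C) := Nat.sub_one_le_mul_sub hne.card_pos hsmall
    _ = ∑ _ ∈ C, (k - #C) := by rw [sum_const, smul_eq_mul]
    _ ≤ _ := sum_le_sum fun v hv => sub_card_le_card_filter_adj hv (hclosed v hv) (hdeg v hv)

lemma card_le_card_of_pairwiseDisjoint_small {𝒞 : Finset (Finset V)}
    (hdisj : (𝒞 : Set (Finset V)).PairwiseDisjoint id) (hne : ∀ C ∈ 𝒞, C.Nonempty)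
    (hsmall : ∀ C ∈ 𝒞, #C < k) (hclosed : ∀ C ∈ 𝒞, ∀ v ∈ C, H.neighborFinset v ⊆ C ∪ S)
    (hdeg : ∀ C ∈ 𝒞, ∀ v ∈ C, k - 1 ≤ H.degree v) (hS : ∀ s ∈ S, H.degree s ≤ k - 1) :
    #𝒞 ≤ #S := by
  let edges (C : Finset V) := (C ×ˢ S).filter fun p => H.Adj p.1 p.2
  have hedges : (𝒞 : Set (Finset V)).PairwiseDisjoint edges := fun C hC D hD hCD =>
    disjoint_filter_filter (disjoint_product.mpr (.inl (hdisj hC hD hCD)))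
  have hcount : #𝒞 * (k - 1) ≤ #S * (k - 1) :=
    calc #𝒞 * (k - 1) ≤ ∑ C ∈ 𝒞, #(edges C) := by
          simpa using card_nsmul_le_sum 𝒞 (fun C => #(edges C)) (k - 1) fun C hC =>
            sub_one_le_card_filter_adj_product (hne C hC) (hsmall C hC) (hclosed C hC) (hdeg C hC)
      _ = #(𝒞.biUnion edges) := (card_biUnion hedges).symm
      _ ≤ #(edges univ) := card_le_card (biUnion_subset.mpr fun C _ =>
          filter_subset_filter _ (product_subset_product_left (subset_univ C)))
      _ = ∑ s ∈ S, H.degree s := by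
          rw [card_filter, sum_product_right]
          refine sum_congr rfl fun s _ => ?_
          rw [← card_filter, ← card_neighborFinset_eq_degree, neighborFinset_eq_filter]
          simp only [adj_comm]
      _ ≤ #S * (k - 1) := by simpa using sum_le_card_nsmul S (fun s => H.degree s) (k - 1) hS
  rcases 𝒞.eq_empty_or_nonempty with rfl | ⟨C, hC⟩
  · simp
  · have := (hne C hC).card_pos
    exact Nat.le_of_mul_le_mul_right hcount (by have := hsmall C hC; omega)

lemma card_le_of_pairwiseDisjoint_closed {𝒟 : Finset (Finset V)} (x : V) (hk : 0 < k)
    (hdisj : (𝒟 : Set (Finset V)).PairwiseDisjoint id) (hne : ∀ C ∈ 𝒟, C.Nonempty)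
    (hS : ∀ C ∈ 𝒟, Disjoint C S) (hclosed : ∀ C ∈ 𝒟, ∀ v ∈ C, H.neighborFinset v ⊆ C ∪ S)
    (hmax : ∀ v, H.degree v ≤ k - 1) (hmin : ∀ v ≠ x, k - 1 ≤ H.degree v) :
    #𝒟 ≤ #S + 1 + #Sᶜ / k := by
  let withX := 𝒟.filter (x ∈ ·)
  let small := 𝒟.filter fun C => x ∉ C ∧ #C < k
  let big := 𝒟.filter (k ≤ #·)
  have hsplit : 𝒟 ⊆ small ∪ withX ∪ big := by
    intro C hC
    simp only [mem_union, mem_filter, small, withX, big]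
    by_cases hx : x ∈ C <;> by_cases hCk : #C < k <;> simp_all [not_lt.mp]
  have hwithX : #withX ≤ 1 := card_le_one.mpr fun C hC D hD => by
    by_contra hCD
    exact Finset.disjoint_left.mp (hdisj (mem_filter.mp hC).1 (mem_filter.mp hD).1 hCD)
      (mem_filter.mp hC).2 (mem_filter.mp hD).2
  have hsmall : #small ≤ #S := by
    refine card_le_card_of_pairwiseDisjoint_small (hdisj.subset (filter_subset _ _))
      (fun C hC => hne C (mem_filter.mp hC).1) (fun C hC => (mem_filter.mp hC).2.2)
      (fun C hC => hclosed C (mem_filter.mp hC).1) (fun C hC v hv => hmin v ?_)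
      (fun s _ => hmax s)
    rintro rfl
    exact (mem_filter.mp hC).2.1 hv
  have hbig : #big * k ≤ #Sᶜ :=
    card_mul_le_card_of_pairwiseDisjoint (hdisj.subset (filter_subset _ _))
      (fun C hC => subset_compl_iff_disjoint_right.mpr (hS C (mem_filter.mp hC).1))
      (fun C hC => (mem_filter.mp hC).2)
  calc #𝒟 ≤ #(small ∪ withX ∪ big) := card_le_card hsplit
    _ ≤ #small + #withX + #big := (card_union_le _ _).trans (by gcongr; exact card_union_le _ _)
    _ ≤ #S + 1 + #Sᶜ / k := by gcongr; exact (Nat.le_div_iff_mul_le hk).mpr hbig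

lemma exists_finset_components_deleteVerts (S : Finset V) :
    ∃ 𝒟 : Finset (Finset V), H.numOddComponentsDeleteVerts S ≤ #𝒟 ∧
      (𝒟 : Set (Finset V)).PairwiseDisjoint id ∧ (∀ C ∈ 𝒟, C.Nonempty) ∧
      (∀ C ∈ 𝒟, Disjoint C S) ∧ (∀ C ∈ 𝒟, ∀ v ∈ C, H.neighborFinset v ⊆ C ∪ S) := by
  classical
  let K := ((⊤ : H.Subgraph).deleteVerts S).coe
  let vertsOf (c : K.ConnectedComponent) : Finset V := c.supp.toFinset.map (.subtype _)
  have hinj : Function.Injective vertsOf := fun c d hcd =>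
    ConnectedComponent.supp_inj.mp (Set.toFinset_inj.mp (Finset.map_injective _ hcd))
  refine ⟨univ.image vertsOf, ?_, ?_, ?_, ?_, ?_⟩
  · rw [card_image_of_injective _ hinj, card_univ, ← Nat.card_eq_fintype_card,
      ← Set.ncard_univ]
    exact Set.ncard_le_ncard (Set.subset_univ _)
  · rw [coe_image]
    rintro _ ⟨c, -, rfl⟩ _ ⟨d, -, rfl⟩ hne
    have hcd : c ≠ d := fun h => hne (congrArg vertsOf h)
    exact (disjoint_map _).mpr
      (Set.disjoint_toFinset.mpr (pairwise_disjoint_supp_connectedComponent _ hcd))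
  · refine forall_mem_image.mpr fun c _ => ?_
    simpa [vertsOf] using c.nonempty_supp
  · refine forall_mem_image.mpr fun c _ => Finset.disjoint_left.mpr ?_
    simp only [vertsOf, mem_map, Set.mem_toFinset, Function.Embedding.coe_subtype]
    rintro _ ⟨a, -, rfl⟩
    simpa using a.2.2
  · refine forall_mem_image.mpr fun c _ v hv w hw => ?_
    simp only [vertsOf, mem_map, Set.mem_toFinset, Function.Embedding.coe_subtype] at hv ⊢
    obtain ⟨a, ha, rfl⟩ := hv
    by_cases hwS : w ∈ S
    · exact mem_union_right _ hwS
    · refine mem_union_left _ (mem_map.mpr ⟨⟨w, by simpa using hwS⟩, ?_, rfl⟩)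
      exact Set.mem_toFinset.mpr (c.mem_supp_of_adj_mem_supp ha (Subgraph.deleteVerts_adj.mpr
        ⟨trivial, a.2.2, trivial, hwS, (mem_neighborFinset _ _ _).mp hw⟩))

theorem exists_isMatching_notMem_verts_card_le (x : V) (hk : 0 < k)
    (hmax : ∀ v, H.degree v ≤ k - 1) (hmin : ∀ v ≠ x, k - 1 ≤ H.degree v) :
    ∃ M : H.Subgraph, M.IsMatching ∧ x ∉ M.verts ∧
      Fintype.card V ≤ M.verts.ncard + 3 + Fintype.card V / k := by
  classical
  obtain ⟨M, hM, S, hMS⟩ := H.exists_isMatching_card_add_le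
  obtain ⟨𝒟, hodd, hdisj, hne, hS, hclosed⟩ :=
    exists_finset_components_deleteVerts (H := H) S.toFinset
  rw [Set.coe_toFinset] at hodd
  have hcount := card_le_of_pairwiseDisjoint_closed x hk hdisj hne hS hclosed hmax hmin
  have hdiv : #S.toFinsetᶜ / k ≤ Fintype.card V / k := Nat.div_le_div_right (card_le_univ _)
  obtain ⟨M', hM', hxM', hMM'⟩ := hM.exists_notMem_verts x
  refine ⟨M', hM', hxM', ?_⟩
  rw [Nat.card_eq_fintype_card] at hMS
  rw [← Set.ncard_eq_toFinset_card'] at hcount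
  omega

end ComponentCount

end SimpleGraph

open SimpleGraph

lemma degr_eq_degree {V : Type*} (G : SimpleGraph V) (v : V) [Fintype (G.neighborSet v)] :
    degr G v = G.degree v := by
  rw [degr, ← card_neighborSet_eq_degree, ← Nat.card_coe_set_eq, Nat.card_eq_fintype_card]

/-- A matching is formalised as a subgraph `M` of the complement `Gᶜ`
satisfying `M.IsMatching`; the vertices it covers are `M.verts`. -/
theorem matching_in_complement_of_almost_regular
    (V : Type*) [Fintype V] (G : SimpleGraph V) (r : ℕ) (x : V)
    (hx : degr G x = r + 1) (hother : ∀ v : V, v ≠ x → degr G v = r) :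
    ∃ M : SimpleGraph.Subgraph Gᶜ, M.IsMatching ∧ x ∉ M.verts ∧
      (Fintype.card V : ℝ) - (Fintype.card V : ℝ) / ((Fintype.card V : ℝ) - (r : ℝ)) - 3 ≤
        (M.verts.ncard : ℝ) := by
  classical
  set n := Fintype.card V
  simp only [degr_eq_degree] at hx hother
  have hrn : r + 2 ≤ n := by
    have := G.degree_lt_card_verts x
    omega
  have hmax : ∀ v, Gᶜ.degree v ≤ n - r - 1 := fun v => by
    rw [degree_compl]
    by_cases hv : v = x
    · subst hv; omega
    · rw [hother v hv]; omega
  have hmin : ∀ v ≠ x, n - r - 1 ≤ Gᶜ.degree v := fun v hv => by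
    rw [degree_compl, hother v hv]; omega
  obtain ⟨M, hM, hxM, hcard⟩ :=
    Gᶜ.exists_isMatching_notMem_verts_card_le x (by omega : 0 < n - r) hmax hmin
  refine ⟨M, hM, hxM, ?_⟩
  have hk : ((n - r : ℕ) : ℝ) = n - r := Nat.cast_sub (by omega)
  have hdiv : ((n / (n - r) : ℕ) : ℝ) ≤ n / (n - r) := hk ▸ Nat.cast_div_le
  have : (n : ℝ) ≤ M.verts.ncard + 3 + ((n / (n - r) : ℕ) : ℝ) := by exact_mod_cast hcard
  linarith
end

section
/- For all τ, p ∈ (0,1) there exists ε₀ with 0 < ε₀ ≤ τ such that for every ε ∈ (0,ε₀] there exists n₀ ∈ ℕ for which the following holds: every lower-(p,ε)-regular graph G on n ≥ n₀ vertices is a robust (ε,τ)-expander. -/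
/-!
Call a vertex bad if it has fewer than `εn` neighbours in `S`. Lower regularity forbids a pair of
disjoint sets `A`, `B` with `|A|, |B| ≥ εn` in which every vertex of `A` has fewer than `εn`
neighbours in `B`, since then `(p - ε)|A||B| ≤ e(A, B) < |A| εn`. Applied to the bad vertices
outside `S` against `S`, this shows there are fewer than `εn` of them. Splitting the bad vertices
inside `S` into a piece of size `⌈εn⌉` and the rest shows there are fewer than
`εn + 1 + εn / (p - ε)` of them, which is at most `τn - 2εn` once `ε ≤ pτ/8` and
`τn ≥ 3`.
So at least `n - τn + εn ≥ |S| + εn` vertices are good.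
-/

/-- `G` is a robust (ν,τ)-expander. -/
def RobustExpander {V : Type*} [Fintype V] (G : SimpleGraph V) (ν τ : ℝ) : Prop :=
  ∀ S : Set V,
    τ * (Fintype.card V : ℝ) ≤ (S.ncard : ℝ) →
    (S.ncard : ℝ) ≤ (1 - τ) * (Fintype.card V : ℝ) →
    (S.ncard : ℝ) + ν * (Fintype.card V : ℝ) ≤
      (({v : V | ν * (Fintype.card V : ℝ) ≤ ((S ∩ G.neighborSet v).ncard : ℝ)}.ncard) : ℝ)

/-- `G` is lower-(p,ε)-regular: `e_G(S,T) ≥ (p-ε)|S||T|` for all disjoint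
`S, T ⊆ V(G)` with `|S|, |T| ≥ εn`. -/
def LowerRegular {V : Type*} [Fintype V] (G : SimpleGraph V) (p ε : ℝ) : Prop :=
  ∀ S T : Set V, Disjoint S T →
    ε * (Fintype.card V : ℝ) ≤ (S.ncard : ℝ) →
    ε * (Fintype.card V : ℝ) ≤ (T.ncard : ℝ) →
    (p - ε) * (S.ncard : ℝ) * (T.ncard : ℝ) ≤
      (({q : V × V | q.1 ∈ S ∧ q.2 ∈ T ∧ G.Adj q.1 q.2}.ncard) : ℝ)

open Finset in
theorem SimpleGraph.ncard_adj_pairs_le_mul {V : Type*} [Fintype V] (G : SimpleGraph V)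
    {A B : Set V} {c : ℝ} (h : ∀ v ∈ A, ((B ∩ G.neighborSet v).ncard : ℝ) ≤ c) :
    ({q : V × V | q.1 ∈ A ∧ q.2 ∈ B ∧ G.Adj q.1 q.2}.ncard : ℝ) ≤ A.ncard * c := by
  classical
  have hcover : {q : V × V | q.1 ∈ A ∧ q.2 ∈ B ∧ G.Adj q.1 q.2} ⊆
      ⋃ v ∈ A.toFinset, {v} ×ˢ (B ∩ G.neighborSet v) := by
    rintro ⟨v, w⟩ ⟨hv, hw, hvw⟩
    simp only [Set.mem_iUnion, Set.mem_toFinset]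
    exact ⟨v, hv, rfl, hw, hvw⟩
  calc ({q : V × V | q.1 ∈ A ∧ q.2 ∈ B ∧ G.Adj q.1 q.2}.ncard : ℝ)
      ≤ ∑ v ∈ A.toFinset, ((({v} : Set V) ×ˢ (B ∩ G.neighborSet v)).ncard : ℝ) := by
        exact_mod_cast (Set.ncard_le_ncard hcover).trans (A.toFinset.set_ncard_biUnion_le _)
    _ ≤ ∑ _v ∈ A.toFinset, c := by
        refine sum_le_sum fun v hv => ?_
        simpa [Set.ncard_prod] using h v (Set.mem_toFinset.1 hv)
    _ = A.ncard * c := by rw [sum_const, nsmul_eq_mul, Set.ncard_eq_toFinset_card']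

theorem LowerRegular.sub_mul_ncard_le_of_sparse {V : Type*} [Fintype V] {G : SimpleGraph V}
    {p ε c : ℝ} (hG : LowerRegular G p ε) (hεn : 0 < ε * Fintype.card V) {A B : Set V}
    (hAB : Disjoint A B) (hA : ε * Fintype.card V ≤ A.ncard)
    (hB : ε * Fintype.card V ≤ B.ncard)
    (hsparse : ∀ v ∈ A, ((B ∩ G.neighborSet v).ncard : ℝ) ≤ c) :
    (p - ε) * B.ncard ≤ c := by
  have hApos : (0 : ℝ) < A.ncard := hεn.trans_le hA
  refine le_of_mul_le_mul_left ?_ hApos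
  calc (A.ncard : ℝ) * ((p - ε) * B.ncard) = (p - ε) * A.ncard * B.ncard := by ring
    _ ≤ _ := hG A B hAB hA hB
    _ ≤ A.ncard * c := G.ncard_adj_pairs_le_mul hsparse

theorem LowerRegular.sub_mul_ncard_sub_ceil_le_of_sparse {V : Type*} [Fintype V]
    {G : SimpleGraph V} {p ε : ℝ} (hG : LowerRegular G p ε) (hεp : ε ≤ p) (hp : p ≤ 1)
    (hεn : 0 < ε * Fintype.card V) {T : Set V}
    (hT : ∀ v ∈ T, ((T ∩ G.neighborSet v).ncard : ℝ) < ε * Fintype.card V) :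
    (p - ε) * (T.ncard - ⌈ε * Fintype.card V⌉₊) ≤ ε * Fintype.card V := by
  set m := ⌈ε * Fintype.card V⌉₊
  rcases le_or_gt m T.ncard with hm | hm
  · obtain ⟨A, hAT, hA⟩ := Set.exists_subset_card_eq hm
    have hB : ((T \ A).ncard : ℝ) = T.ncard - m := by
      rw [Set.ncard_sdiff hAT, Nat.cast_sub (hA ▸ hm), hA]
    rw [← hB]
    by_cases hBlarge : ε * Fintype.card V ≤ (T \ A).ncard
    · refine hG.sub_mul_ncard_le_of_sparse hεn Set.disjoint_sdiff_right (hA ▸ Nat.le_ceil _)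
        hBlarge fun v hv => le_trans ?_ (hT v (hAT hv)).le
      exact_mod_cast Set.ncard_le_ncard (Set.inter_subset_inter_left _ Set.sdiff_subset)
    · have hε : 0 < ε := pos_of_mul_pos_left hεn (Nat.cast_nonneg _)
      nlinarith [(Nat.cast_nonneg (T \ A).ncard : (0 : ℝ) ≤ _)]
  · have : (T.ncard : ℝ) - m < 0 := by rw [sub_neg]; exact_mod_cast hm
    nlinarith

theorem SimpleGraph.ncard_add_le_ncard_rich {V : Type*} [Fintype V] (G : SimpleGraph V)
    {S : Set V} {ν τ : ℝ} (hS : (S.ncard : ℝ) ≤ (1 - τ) * Fintype.card V)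
    (hpoor : ({v | ((S ∩ G.neighborSet v).ncard : ℝ) < ν * Fintype.card V}.ncard : ℝ) ≤
      τ * Fintype.card V - ν * Fintype.card V) :
    (S.ncard : ℝ) + ν * Fintype.card V ≤
      {v | ν * Fintype.card V ≤ ((S ∩ G.neighborSet v).ncard : ℝ)}.ncard := by
  have hcompl := Set.ncard_add_ncard_compl
    {v | ((S ∩ G.neighborSet v).ncard : ℝ) < ν * Fintype.card V}
  simp only [Set.compl_ofPred, not_lt, Nat.card_eq_fintype_card] at hcompl
  have := congrArg (Nat.cast : ℕ → ℝ) hcompl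
  push_cast at this
  linarith

/-- Glock–Kühn–Osthus. -/
theorem lower_regular_is_robust_expander :
    ∀ τ p : ℝ, 0 < τ → τ < 1 → 0 < p → p < 1 →
    ∃ ε₀ : ℝ, 0 < ε₀ ∧ ε₀ ≤ τ ∧
      ∀ ε : ℝ, 0 < ε → ε ≤ ε₀ →
        ∃ n₀ : ℕ, ∀ (V : Type) [Fintype V] (G : SimpleGraph V),
          n₀ ≤ Fintype.card V →
          LowerRegular G p ε →
          RobustExpander G ε τ := by
  intro τ p hτ _ hp hp1
  refine ⟨p * τ / 8, by positivity, by nlinarith, fun ε hε hεε₀ => ⟨⌈3 / τ⌉₊, ?_⟩⟩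
  intro V _ G hn hG S hS hS'
  have hτn : 3 ≤ τ * Fintype.card V := by
    have : 3 / τ ≤ Fintype.card V := (Nat.le_ceil _).trans (by exact_mod_cast hn)
    rwa [div_le_iff₀ hτ, mul_comm] at this
  set n : ℝ := (Fintype.card V : ℝ)
  have hεn : 0 < ε * n := mul_pos hε (by nlinarith)
  have hεn_le : ε * n ≤ p * (τ * n) / 8 := by nlinarith
  have hpε : 7 * p / 8 ≤ p - ε := by nlinarith
  set bad : Set V := {v | ((S ∩ G.neighborSet v).ncard : ℝ) < ε * n}
  have hout : ((bad \ S).ncard : ℝ) < ε * n := by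
    by_contra! h
    have := hG.sub_mul_ncard_le_of_sparse hεn Set.disjoint_sdiff_left h (by nlinarith)
      fun v hv => hv.1.le
    nlinarith
  have hin_sparse := hG.sub_mul_ncard_sub_ceil_le_of_sparse (T := bad ∩ S) (by nlinarith)
    hp1.le hεn fun v hv => lt_of_le_of_lt (mod_cast
      Set.ncard_le_ncard (Set.inter_subset_inter_left _ Set.inter_subset_right)) hv.1
  have hin : ((bad ∩ S).ncard : ℝ) ≤ τ * n - 2 * (ε * n) := by
    have hceil := Nat.ceil_lt_add_one hεn.le
    -- otherwise `εn ≥ (p - ε)(τn - 3εn - 1) ≥ (7p/8)(7τn/24) > pτn/8`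
    by_contra! h
    nlinarith
  refine G.ncard_add_le_ncard_rich hS' ?_
  have : ((bad ∩ S).ncard : ℝ) + (bad \ S).ncard = bad.ncard :=
    mod_cast Set.ncard_inter_add_ncard_sdiff_eq_ncard bad S
  linarith
end

section
/- Suppose 0 < ν ≤ τ ≤ ε < 1 are real numbers with ε ≥ 4ν/τ. Let G be a finite simple graph on n vertices with minimum degree δ(G) ≥ (1+ε)n/2. Then G is a robust (ν,τ)-expander. -/
/-- The minimum degree δ(G). -/
noncomputable def minDeg {V : Type*} (G : SimpleGraph V) : ℕ :=
  sInf (Set.range (degr G))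

/-!
Write `RN(S)` for the vertices with at least `νn` neighbours in `S`. Since `τn ≤ |S|`, the
threshold `νn` is at most `ν|S|/τ ≤ ε|S|/4`.
If `|S| ≥ n/2`, every vertex has at least `|S| + δ - n ≥ εn/2 ≥ νn` neighbours in `S`, so
`RN(S)` is everything and `|S| + νn ≤ (1 - τ)n + τn = n`.
If `|S| ≤ n/2`, double counting the edges between `S` and `V` gives
`δ|S| ≤ ∑ᵥ |S ∩ N(v)| ≤ |RN(S)||S| + n·νn`, so `|RN(S)| ≥ δ - εn/4 ≥ n/2 + εn/4 ≥ |S| + νn`.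
-/

open Finset

theorem Finset.sum_le_card_filter_mul_add {ι : Type*} (s : Finset ι) (f : ι → ℝ) {M r : ℝ}
    (hM : ∀ i ∈ s, f i ≤ M) (hr : 0 ≤ r) :
    ∑ i ∈ s, f i ≤ #{i ∈ s | r ≤ f i} * M + #s * r := by
  rw [← sum_filter_add_sum_filter_not s (fun i : ι ↦ r ≤ f i)]
  gcongr ?_ + ?_
  · simpa using sum_le_card_nsmul _ f M fun i hi ↦ hM i (mem_filter.1 hi).1
  · calc ∑ i ∈ s with ¬r ≤ f i, f i
        ≤ #{i ∈ s | ¬r ≤ f i} * r := by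
          simpa using sum_le_card_nsmul _ f r fun i hi ↦ (not_le.1 (mem_filter.1 hi).2).le
      _ ≤ #s * r := by gcongr; exact filter_subset _ _

namespace SimpleGraph

variable {V : Type*} (G : SimpleGraph V)

/-- The paper's `RN_ν(S)` is `robustNeighborhood G S (ν * n)`. -/
def robustNeighborhood (S : Set V) (r : ℝ) : Set V :=
  {v | r ≤ ((S ∩ G.neighborSet v).ncard : ℝ)}

theorem minDeg_le_degr (v : V) : minDeg G ≤ degr G v :=
  Nat.sInf_le ⟨v, rfl⟩

theorem ncard_mul_minDeg_le_sum_ncard_inter_neighborSet [Fintype V] (S : Set V) :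
    S.ncard * minDeg G ≤ ∑ v, (S ∩ G.neighborSet v).ncard := by
  classical
  have hcount : ∑ v, (S ∩ G.neighborSet v).ncard = ∑ u ∈ S.toFinset, degr G u := by
    convert sum_card_bipartiteAbove_eq_sum_card_bipartiteBelow (s := univ) (t := S.toFinset)
      (r := G.Adj) using 2 with v _ u _
    · rw [Set.ncard_eq_toFinset_card', bipartiteAbove]
      congr 1; ext; simp
    · rw [degr, Set.ncard_eq_toFinset_card', bipartiteBelow]
      congr 1; ext; simp [adj_comm]
  calc S.ncard * minDeg G = ∑ _u ∈ S.toFinset, minDeg G := by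
        simp [Set.ncard_eq_toFinset_card']
    _ ≤ ∑ u ∈ S.toFinset, degr G u := sum_le_sum fun u _ ↦ G.minDeg_le_degr u
    _ = _ := hcount.symm

theorem minDeg_mul_ncard_le [Fintype V] (S : Set V) {r : ℝ} (hr : 0 ≤ r) :
    (minDeg G : ℝ) * S.ncard ≤
      (G.robustNeighborhood S r).ncard * S.ncard + Fintype.card V * r := by
  classical
  have hR : (G.robustNeighborhood S r).ncard = #{v | r ≤ ((S ∩ G.neighborSet v).ncard : ℝ)} := by
    rw [Set.ncard_eq_toFinset_card', robustNeighborhood, Set.toFinset_ofPred]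
  calc (minDeg G : ℝ) * S.ncard ≤ ∑ v, ((S ∩ G.neighborSet v).ncard : ℝ) := by
        rw [mul_comm]; exact_mod_cast G.ncard_mul_minDeg_le_sum_ncard_inter_neighborSet S
    _ ≤ _ := by
        rw [hR, ← card_univ]
        exact sum_le_card_filter_mul_add _ _
          (fun v _ ↦ by exact_mod_cast Set.ncard_le_ncard Set.inter_subset_left) hr

theorem ncard_add_minDeg_le_ncard_inter_neighborSet_add [Fintype V] (S : Set V) (v : V) :
    S.ncard + minDeg G ≤ (S ∩ G.neighborSet v).ncard + Fintype.card V := by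
  have hunion := Set.ncard_inter_add_ncard_union S (G.neighborSet v)
  have huniv := (S ∪ G.neighborSet v).ncard_le_card
  have hdeg := G.minDeg_le_degr v
  rw [Nat.card_eq_fintype_card] at huniv
  rw [degr] at hdeg
  omega

theorem robustNeighborhood_eq_univ [Fintype V] (S : Set V) {r : ℝ}
    (hr : r + Fintype.card V ≤ S.ncard + minDeg G) : G.robustNeighborhood S r = Set.univ := by
  refine Set.eq_univ_of_forall fun v ↦ ?_
  have hv : ((S.ncard + minDeg G : ℕ) : ℝ) ≤ ((S ∩ G.neighborSet v).ncard + Fintype.card V : ℕ) :=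
    Nat.cast_le.2 (G.ncard_add_minDeg_le_ncard_inter_neighborSet_add S v)
  push_cast at hv
  show r ≤ ((S ∩ G.neighborSet v).ncard : ℝ)
  linarith

theorem ncard_add_le_ncard_robustNeighborhood_of_ncard_le_half [Fintype V] (S : Set V)
    {ε r : ℝ} (hδ : (1 + ε) * Fintype.card V / 2 ≤ minDeg G) (hr : 0 ≤ r)
    (hrS : r ≤ ε / 4 * S.ncard) (hS : (S.ncard : ℝ) ≤ Fintype.card V / 2) :
    S.ncard + r ≤ (G.robustNeighborhood S r).ncard := by
  have hR : (0 : ℝ) ≤ (G.robustNeighborhood S r).ncard := Nat.cast_nonneg _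
  rcases (Nat.cast_nonneg S.ncard : (0 : ℝ) ≤ S.ncard).eq_or_lt with hS₀ | hS₀
  · rw [← hS₀] at hrS ⊢
    linarith
  have hε : 0 ≤ ε := by nlinarith
  have hcount := G.minDeg_mul_ncard_le S hr
  -- after multiplying by `|S|`: `(|S| + r)|S| ≤ (n/2 + εn/8)|S| ≤ (δ - εn/4)|S| ≤ |RN(S)||S|`
  refine le_of_mul_le_mul_right ?_ hS₀
  nlinarith [mul_le_mul_of_nonneg_right hδ hS₀.le, mul_le_mul_of_nonneg_right hS hS₀.le,
    mul_le_mul_of_nonneg_left hrS (Nat.cast_nonneg (Fintype.card V) : (0 : ℝ) ≤ _),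
    mul_le_mul_of_nonneg_right hrS hS₀.le, mul_le_mul_of_nonneg_left hS (mul_nonneg hε hS₀.le)]

end SimpleGraph

theorem large_min_degree_is_robust_expander_general
    (V : Type*) [Fintype V] (G : SimpleGraph V) (ν τ ε : ℝ)
    (hν : 0 < ν) (hντ : ν ≤ τ)
    (hratio : 4 * ν / τ ≤ ε)
    (hδ : (1 + ε) * (Fintype.card V : ℝ) / 2 ≤ (minDeg G : ℝ)) :
    RobustExpander G ν τ := by
  intro S hS_lo hS_hi
  change (S.ncard : ℝ) + ν * Fintype.card V ≤ (G.robustNeighborhood S (ν * Fintype.card V)).ncard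
  have hn : (0 : ℝ) ≤ Fintype.card V := Nat.cast_nonneg _
  have hτ : 0 < τ := hν.trans_le hντ
  have hε₀ : 0 ≤ ε := (div_pos (by positivity) hτ).le.trans hratio
  have hr : 0 ≤ ν * Fintype.card V := by positivity
  have hrS : ν * Fintype.card V ≤ ε / 4 * S.ncard := by
    rw [div_le_iff₀ hτ] at hratio
    nlinarith [mul_le_mul_of_nonneg_left hS_lo hε₀]
  rcases le_total (S.ncard : ℝ) (Fintype.card V / 2) with hsmall | hlarge
  · exact G.ncard_add_le_ncard_robustNeighborhood_of_ncard_le_half S hδ hr hrS hsmall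
  · have hSn : (S.ncard : ℝ) ≤ Fintype.card V := by
      exact_mod_cast Nat.card_eq_fintype_card (α := V) ▸ S.ncard_le_card
    rw [G.robustNeighborhood_eq_univ S (by nlinarith [mul_le_mul_of_nonneg_left hSn hε₀]),
      Set.ncard_univ, Nat.card_eq_fintype_card]
    nlinarith [mul_le_mul_of_nonneg_right hντ hn]

/-- Kühn–Osthus. -/
theorem large_min_degree_is_robust_expander
    (V : Type*) [Fintype V] (G : SimpleGraph V) (ν τ ε : ℝ)
    (hν : 0 < ν) (hντ : ν ≤ τ) (hτε : τ ≤ ε) (hε : ε < 1)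
    (hratio : 4 * ν / τ ≤ ε)
    (hδ : (1 + ε) * (Fintype.card V : ℝ) / 2 ≤ (minDeg G : ℝ)) :
    RobustExpander G ν τ :=
  large_min_degree_is_robust_expander_general V G ν τ ε hν hντ hratio hδ
end

section
/- Let d₁ ≥ d₂ ≥ … ≥ dₙ ≥ 0 be integers. Then there exists a loopless multigraph on vertices v₁,…,vₙ — that is, a symmetric function m : {1,…,n} × {1,…,n} → ℕ with m(i,i) = 0 for all i, where deg(v_i) = Σ_{j=1}^n m(i,j) — such that deg(v_i) = d_i for all i ∈ [1,n], if and only if Σ_{i=1}^n d_i is even and d₁ ≤ Σ_{i=2}^n d_i. -/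
/-!
Necessity: the sum of the symmetric multiplicity matrix counts every edge twice, and each of the
`d₁` edges at `v₁` is counted in the degree of its other end. Sufficiency, by induction on the
degree sum: take a vertex `a` of maximum degree and another vertex `b` of positive degree, lower
both degrees by one, realise the smaller sequence and add an edge `ab`. The lowered sequence
still satisfies the bound, since every other degree is at most `(d_a - 1) + 1` and the parity of
the sum absorbs the `+ 1`.
-/

open Finset

namespace Multigraph

variable {V : Type*}

section Edge

variable [DecidableEq V]

def edge (a b : V) : V → V → ℕ := fun i j => if s(i, j) = s(a, b) then 1 else 0

theorem edge_symm (a b i j : V) : edge a b i j = edge a b j i := by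
  simp only [edge, Sym2.eq_swap]

theorem edge_self {a b : V} (hab : a ≠ b) (i : V) : edge a b i i = 0 :=
  if_neg fun h => hab <| by obtain ⟨rfl, rfl⟩ | ⟨rfl, rfl⟩ := Sym2.eq_iff.mp h <;> rfl

theorem sum_edge [Fintype V] {a b : V} (hab : a ≠ b) (i : V) :
    ∑ j, edge a b i j = (Pi.single a 1 + Pi.single b 1 : V → ℕ) i := by
  by_cases ha : i = a
  · subst ha
    simp [edge, hab]
  by_cases hb : i = b
  · subst hb
    simp [edge, ha]
  simp [edge, ha, hb]

theorem exists_eq_add_single_add_single {d : V → ℕ} {a b : V} (hab : a ≠ b) (ha : d a ≠ 0)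
    (hb : d b ≠ 0) : ∃ d' : V → ℕ, d = d' + Pi.single a 1 + Pi.single b 1 := by
  refine ⟨d - Pi.single a 1 - Pi.single b 1, funext fun i => ?_⟩
  simp only [Pi.add_apply, Pi.sub_apply, Pi.single_apply]
  grind

end Edge

variable [Fintype V]

def IsDegreeSeq (d : V → ℕ) : Prop :=
  ∃ m : V → V → ℕ, (∀ i j, m i j = m j i) ∧ (∀ i, m i i = 0) ∧ (∀ i, ∑ j, m i j = d i)

theorem isDegreeSeq_zero : IsDegreeSeq (0 : V → ℕ) :=
  ⟨0, fun _ _ => rfl, fun _ => rfl, fun _ => by simp⟩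

theorem even_sum_sum_of_symm {m : V → V → ℕ} (hsym : ∀ i j, m i j = m j i)
    (hdiag : ∀ i, m i i = 0) : Even (∑ i, ∑ j, m i j) := by
  rw [← ZMod.natCast_eq_zero_iff_even, ← sum_product']
  push_cast
  -- Modulo 2 the entries at `(i, j)` and `(j, i)` cancel, and the diagonal vanishes.
  refine sum_involution (fun p _ => p.swap) (fun p _ => ?_) (fun p _ hp hswap => hp ?_)
    (fun _ _ => mem_product.2 ⟨mem_univ _, mem_univ _⟩) (fun _ _ => rfl)
  · rw [Prod.fst_swap, Prod.snd_swap, hsym p.2 p.1, ← two_mul]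
    exact mul_eq_zero_of_left rfl _
  · rw [show p.1 = p.2 from congrArg Prod.snd hswap, hdiag, Nat.cast_zero]

namespace IsDegreeSeq

variable {d : V → ℕ}

theorem even_sum (h : IsDegreeSeq d) : Even (∑ i, d i) := by
  obtain ⟨m, hsym, hdiag, hdeg⟩ := h
  simp_rw [← hdeg]
  exact even_sum_sum_of_symm hsym hdiag

variable [DecidableEq V]

theorem le_sum_erase (h : IsDegreeSeq d) (a : V) : d a ≤ ∑ i ∈ univ.erase a, d i := by
  obtain ⟨m, hsym, hdiag, hdeg⟩ := h
  calc d a = ∑ j ∈ univ.erase a, m a j := by rw [← hdeg, sum_erase _ (hdiag a)]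
    _ ≤ ∑ j ∈ univ.erase a, d j := sum_le_sum fun j _ => by
      rw [hsym, ← hdeg j]
      exact single_le_sum (fun _ _ => Nat.zero_le _) (mem_univ a)

theorem add_edge (h : IsDegreeSeq d) {a b : V} (hab : a ≠ b) :
    IsDegreeSeq (d + Pi.single a 1 + Pi.single b 1) := by
  obtain ⟨m, hsym, hdiag, hdeg⟩ := h
  refine ⟨m + edge a b, fun i j => ?_, fun i => ?_, fun i => ?_⟩
  · simp only [Pi.add_apply, hsym i j, edge_symm a b i j]
  · simp only [Pi.add_apply, hdiag, edge_self hab, add_zero]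
  · simp only [Pi.add_apply, sum_add_distrib, hdeg, sum_edge hab, add_assoc]

end IsDegreeSeq

variable [DecidableEq V]

theorem two_mul_le_sum_iff_le_sum_erase (d : V → ℕ) (a : V) :
    2 * d a ≤ ∑ i, d i ↔ d a ≤ ∑ i ∈ univ.erase a, d i := by
  rw [← add_sum_erase _ d (mem_univ a)]
  omega

theorem sum_add_single_add_single (d : V → ℕ) (a b : V) :
    ∑ i, (d + Pi.single a 1 + Pi.single b 1 : V → ℕ) i = ∑ i, d i + 2 := by
  simp only [Pi.add_apply, sum_add_distrib, sum_pi_single', mem_univ, if_true, add_assoc]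

theorem exists_forall_le_and_ne_zero {d : V → ℕ} (hd : d ≠ 0) (hle : ∀ i, 2 * d i ≤ ∑ j, d j) :
    ∃ a b, a ≠ b ∧ (∀ i, d i ≤ d a) ∧ d b ≠ 0 := by
  obtain ⟨i₀, hi₀⟩ := Function.ne_iff.mp hd
  have : Nonempty V := ⟨i₀⟩
  obtain ⟨a, hmax⟩ := Finite.exists_max d
  obtain ⟨b, hb, hdb⟩ := exists_ne_zero_of_sum_ne_zero (s := univ.erase a) (f := d) <| by
    have := (two_mul_le_sum_iff_le_sum_erase d a).1 (hle a)
    have := hmax i₀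
    rw [Pi.zero_apply] at hi₀
    omega
  exact ⟨a, b, (ne_of_mem_erase hb).symm, hmax, hdb⟩

theorem two_mul_le_sum_of_add_single_add_single {d : V → ℕ} {a b : V} (hab : a ≠ b)
    (heven : Even (∑ i, d i))
    (hmax : ∀ i, (d + Pi.single a 1 + Pi.single b 1 : V → ℕ) i ≤
      (d + Pi.single a 1 + Pi.single b 1 : V → ℕ) a)
    (hle : 2 * (d + Pi.single a 1 + Pi.single b 1 : V → ℕ) a ≤
      ∑ j, (d + Pi.single a 1 + Pi.single b 1 : V → ℕ) j) (i : V) :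
    2 * d i ≤ ∑ j, d j := by
  have hea : (d + Pi.single a 1 + Pi.single b 1 : V → ℕ) a = d a + 1 := by simp [hab]
  rw [hea, sum_add_single_add_single] at hle
  rcases eq_or_ne i a with rfl | hia
  · omega
  -- `d i ≤ d a + 1` and `d a ≤ ∑_{j ≠ i} d j`; parity absorbs the `+ 1`.
  have hi : d i ≤ d a + 1 := by
    refine le_trans ?_ (hea ▸ hmax i)
    simp only [Pi.add_apply, add_assoc, Nat.le_add_right]
  have ha : d a ≤ ∑ j ∈ univ.erase i, d j :=
    single_le_sum (fun _ _ => Nat.zero_le _) (mem_erase.2 ⟨hia.symm, mem_univ a⟩)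
  have hsplit := add_sum_erase univ d (mem_univ i)
  obtain ⟨k, hk⟩ := heven
  omega

theorem isDegreeSeq_of_even_of_two_mul_le {d : V → ℕ} (heven : Even (∑ i, d i))
    (hle : ∀ i, 2 * d i ≤ ∑ j, d j) : IsDegreeSeq d := by
  induction hS : ∑ i, d i using Nat.strong_induction_on generalizing d with
  | _ S ih =>
    rcases eq_or_ne d 0 with rfl | hd
    · exact isDegreeSeq_zero
    obtain ⟨a, b, hab, hmax, hb⟩ := exists_forall_le_and_ne_zero hd hle
    have ha : d a ≠ 0 := ((Nat.pos_of_ne_zero hb).trans_le (hmax b)).ne'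
    obtain ⟨d', rfl⟩ := exists_eq_add_single_add_single hab ha hb
    rw [sum_add_single_add_single] at heven hS
    have heven' : Even (∑ i, d' i) := (Nat.even_add.mp heven).mpr even_two
    exact (ih _ (by omega) heven'
      (two_mul_le_sum_of_add_single_add_single hab heven' hmax (hle a)) rfl).add_edge hab

theorem isDegreeSeq_iff_of_forall_le {d : V → ℕ} {a : V} (hmax : ∀ i, d i ≤ d a) :
    IsDegreeSeq d ↔ Even (∑ i, d i) ∧ d a ≤ ∑ i ∈ univ.erase a, d i := by
  refine ⟨fun h => ⟨h.even_sum, h.le_sum_erase a⟩, fun ⟨heven, hle⟩ => ?_⟩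
  rw [← two_mul_le_sum_iff_le_sum_erase] at hle
  exact isDegreeSeq_of_even_of_two_mul_le heven fun i => (Nat.mul_le_mul_left 2 (hmax i)).trans hle

end Multigraph

/-- Hakimi.  A loopless multigraph on `v₁, …, vₙ` is a symmetric
edge-multiplicity function `m` with zero diagonal; the degree of `vᵢ` is `∑ j, m i j`. -/
theorem multigraph_degree_sequence
    (n : ℕ) (hn : 0 < n) (d : Fin n → ℕ)
    (hsorted : ∀ i j : Fin n, i ≤ j → d j ≤ d i) :
    (∃ m : Fin n → Fin n → ℕ,
        (∀ i j, m i j = m j i) ∧ (∀ i, m i i = 0) ∧ (∀ i, ∑ j, m i j = d i)) ↔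
      (Even (∑ i, d i) ∧ d ⟨0, hn⟩ ≤ ∑ i ∈ Finset.univ.erase ⟨0, hn⟩, d i) :=
  Multigraph.isDegreeSeq_iff_of_forall_le fun i => hsorted ⟨0, hn⟩ i (Nat.zero_le _)
end
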